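/- arXiv:0912.0741 — 2 statements merged into one kernel-verified Lean document; each statement's English description precedes it below -/
import Mathlib

section
/- For every counter machine C with m counters there exists a counter machine C′ with m counters that simulates C in linear time (each step of C is simulated by a bounded constant number of steps of C′, and C′ halts with output y whenever C halts with output y) and that has the following property: at any timestep at which C′ executes a decrement instruction on some counter, every other counter of C′ holds a value greater than 0. In particular, C′ represents each counter value y of C by the value y + 1, and each decrement instruction q_i : DEC(j), q_l, q_k of C is replaced in C′ by the four instructions q_i : DEC(j), q′_i, q′_i; q′_i : DEC(j), q*_l, q*_k; q*_l : INC(j), q_l; q*_k : INC(j), q_k. -/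
namespace PaperSNP

/-- A counter machine instruction on `z` counters with instruction labels in `Fin h`:
`inc j l` adds 1 to counter `j` and moves to instruction `l`; `dec j l k`
subtracts 1 from counter `j` and moves to `l` if counter `j` is positive,
and otherwise moves to `k`. -/
inductive CMInstr (z h : ℕ) where
  | inc (j : Fin z) (l : Fin h)
  | dec (j : Fin z) (l k : Fin h)

/-- A counter machine with `z` counters and `h` instructions, a set of input
counters, an output counter, an initial instruction and a halt instruction. -/
structure CM (z h : ℕ) where
  prog : Fin h → CMInstr z h
  inputs : Finset (Fin z)
  output : Fin z
  start : Fin h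
  halt : Fin h

/-- One step of a counter machine (the halt instruction does nothing). -/
def CM.stepFn {z h : ℕ} (M : CM z h) (qc : Fin h × (Fin z → ℕ)) : Fin h × (Fin z → ℕ) :=
  if qc.1 = M.halt then qc
  else
    match M.prog qc.1 with
    | CMInstr.inc j l => (l, Function.update qc.2 j (qc.2 j + 1))
    | CMInstr.dec j l k =>
        if 0 < qc.2 j then (l, Function.update qc.2 j (qc.2 j - 1)) else (k, qc.2)

/-- Initial configuration: the input values in the input counters, 0 elsewhere. -/
def CM.initCfg {z h : ℕ} (M : CM z h) (v : Fin z → ℕ) : Fin h × (Fin z → ℕ) :=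
  (M.start, fun j => if j ∈ M.inputs then v j else 0)

/-- The configuration after `t` steps on input `v`. -/
def CM.run {z h : ℕ} (M : CM z h) (v : Fin z → ℕ) (t : ℕ) : Fin h × (Fin z → ℕ) :=
  M.stepFn^[t] (M.initCfg v)

/-- The machine, started on input `v`, reaches the halt instruction for the first
time after exactly `t` steps, with value `y` in its output counter. -/
def CM.HaltsIn {z h : ℕ} (M : CM z h) (v : Fin z → ℕ) (t y : ℕ) : Prop :=
  (M.run v t).1 = M.halt ∧ (∀ s, s < t → (M.run v s).1 ≠ M.halt) ∧
    (M.run v t).2 M.output = y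

/-- The binary input word `1 0^(x1-1) 1`. -/
def inWord1 (x1 : ℕ) : List Bool :=
  true :: (List.replicate (x1 - 1) false ++ [true])

/-- The binary input word `1 0^(x1-1) 1 0^(x2-1) 1`. -/
def inWord2 (x1 x2 : ℕ) : List Bool :=
  true :: (List.replicate (x1 - 1) false ++
    true :: (List.replicate (x2 - 1) false ++ [true]))

/-- The configuration of `M` after `t` steps, started from configuration `c0`. -/
def CM.runFrom {z h : ℕ} (M : CM z h) (c0 : Fin h × (Fin z → ℕ)) (t : ℕ) :
    Fin h × (Fin z → ℕ) :=
  M.stepFn^[t] c0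

/-- The initial configuration of the simulating machine, in which each counter
value `y` of the simulated machine is represented by the value `y + 1`. -/
def repInit {z h : ℕ} (M : CM z h) (v : Fin z → ℕ) : Fin h × (Fin z → ℕ) :=
  (M.start, fun j => (if j ∈ M.inputs then v j else 0) + 1)

/-! ### Auxiliary construction -/

variable {z h : ℕ}

def ph (p : Fin 4) (i : Fin h) : Fin (4 * h) := finProdFinEquiv (p, i)

lemma ph_inj {p p' : Fin 4} {i i' : Fin h} : ph p i = ph p' i' ↔ p = p' ∧ i = i' := by
  unfold ph
  rw [Equiv.apply_eq_iff_eq, Prod.mk.injEq]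

def prog0 (C : CM z h) (p : Fin 4) (i : Fin h) : CMInstr z (4 * h) :=
  match C.prog i with
  | .inc j l => if p = 0 then .inc j (ph 0 l) else .inc j (ph 0 C.halt)
  | .dec j l k =>
      if p = 0 then .dec j (ph 1 i) (ph 1 i)
      else if p = 1 then .dec j (ph 2 i) (ph 3 i)
      else if p = 2 then .inc j (ph 0 l)
      else .inc j (ph 0 k)

def sim (C : CM z h) : CM z (4 * h) where
  prog q := prog0 C (finProdFinEquiv.symm q).1 (finProdFinEquiv.symm q).2
  inputs := C.inputs
  output := C.output
  start := ph 0 C.start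
  halt := ph 0 C.halt

lemma sim_prog (C : CM z h) (p : Fin 4) (i : Fin h) : (sim C).prog (ph p i) = prog0 C p i := by
  have hd : finProdFinEquiv.symm (ph p i) = (p, i) := Equiv.symm_apply_apply _ _
  show prog0 C (finProdFinEquiv.symm (ph p i)).1 (finProdFinEquiv.symm (ph p i)).2 = prog0 C p i
  rw [hd]

lemma sim_halt (C : CM z h) : (sim C).halt = ph 0 C.halt := rfl

lemma ph_ne_halt (C : CM z h) {p : Fin 4} {i : Fin h} (hp : p ≠ 0) :
    ph p i ≠ (sim C).halt := by
  rw [sim_halt]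
  intro hc
  exact hp (ph_inj.mp hc).1

lemma update_succ (c : Fin z → ℕ) (j : Fin z) (n : ℕ) :
    Function.update (fun j' => c j' + 1) j (n + 1) = fun j' => Function.update c j n j' + 1 := by
  funext j'
  by_cases hj : j' = j <;> simp [Function.update_apply, hj]

def cost (C : CM z h) (q : Fin h) : ℕ :=
  if q = C.halt then 1
  else match C.prog q with
    | .inc _ _ => 1
    | .dec _ _ _ => 3

lemma cost_pos (C : CM z h) (q : Fin h) : 1 ≤ cost C q := by
  unfold cost
  split
  · exact le_refl 1
  · rcases C.prog q with ⟨j, l⟩ | ⟨j, l, k⟩ <;> simp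

lemma cost_le (C : CM z h) (q : Fin h) : cost C q ≤ 3 := by
  unfold cost
  split
  · omega
  · rcases C.prog q with ⟨j, l⟩ | ⟨j, l, k⟩ <;> simp

/-- lift of a configuration -/
def liftCfg (qc : Fin h × (Fin z → ℕ)) : Fin (4 * h) × (Fin z → ℕ) :=
  (ph 0 qc.1, fun j => qc.2 j + 1)

lemma step_sim (C : CM z h) (q : Fin h) (c : Fin z → ℕ) :
    (sim C).stepFn^[cost C q] (liftCfg (q, c)) = liftCfg (C.stepFn (q, c)) := by
  by_cases hq : q = C.halt
  · have : cost C q = 1 := by simp [cost, hq]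
    rw [this]
    simp [CM.stepFn, liftCfg, hq, sim_halt]
  · have hne : ph 0 q ≠ (sim C).halt := by
      rw [sim_halt]; intro hc; exact hq (ph_inj.mp hc).2
    rcases hprog : C.prog q with ⟨j, l⟩ | ⟨j, l, k⟩
    · have hco : cost C q = 1 := by simp [cost, hq, hprog]
      rw [hco, Function.iterate_one]
      have hs : C.stepFn (q, c) = (l, Function.update c j (c j + 1)) := by
        simp [CM.stepFn, hq, hprog]
      rw [hs]
      simp only [liftCfg, CM.stepFn, if_neg hne, sim_prog, prog0, hprog, reduceIte]
      congr 1
      funext j'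
      by_cases hj : j' = j
      · subst hj; simp [Function.update_apply]
      · simp [Function.update_apply, hj]
    · have : cost C q = 3 := by simp [cost, hq, hprog]
      rw [this]
      have h1 : (sim C).stepFn (liftCfg (q, c)) =
          (ph 1 q, Function.update (fun j' => c j' + 1) j (c j)) := by
        simp only [liftCfg, CM.stepFn, if_neg hne, sim_prog, prog0, hprog, reduceIte]
        simp
      have hne1 : ph 1 q ≠ (sim C).halt := ph_ne_halt C (by decide)
      have hprog1 : (sim C).prog (ph 1 q) = CMInstr.dec j (ph 2 q) (ph 3 q) := by
        rw [sim_prog]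
        simp [prog0, hprog]
      have hval1 : Function.update (fun j' => c j' + 1) j (c j) j = c j := by simp
      by_cases hcj : 0 < c j
      · have h2 : (sim C).stepFn (ph 1 q, Function.update (fun j' => c j' + 1) j (c j)) =
            (ph 2 q, Function.update (fun j' => c j' + 1) j (c j - 1)) := by
          simp only [CM.stepFn, if_neg hne1, hprog1, hval1, if_pos hcj]
          congr 1
          funext j'
          by_cases hj : j' = j <;> simp [Function.update_apply, hj]
        have hne2 : ph 2 q ≠ (sim C).halt := ph_ne_halt C (by decide)
        have hprog2 : (sim C).prog (ph 2 q) = CMInstr.inc j (ph 0 l) := by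
          rw [sim_prog]; simp [prog0, hprog]
        have h3 : (sim C).stepFn (ph 2 q, Function.update (fun j' => c j' + 1) j (c j - 1)) =
            (ph 0 l, fun j' => Function.update c j (c j - 1) j' + 1) := by
          simp only [CM.stepFn, if_neg hne2, hprog2]
          congr 1
          funext j'
          by_cases hj : j' = j
          · subst hj; simp [Function.update_apply]
          · simp [Function.update_apply, hj]
        show (sim C).stepFn ((sim C).stepFn ((sim C).stepFn _)) = _
        rw [h1, h2, h3]
        simp [liftCfg, CM.stepFn, hq, hprog, hcj]
      · have hc0 : c j = 0 := by omega
        have h2 : (sim C).stepFn (ph 1 q, Function.update (fun j' => c j' + 1) j (c j)) =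
            (ph 3 q, Function.update (fun j' => c j' + 1) j (c j)) := by
          simp only [CM.stepFn, if_neg hne1, hprog1, hval1, if_neg hcj]
        have hne3 : ph 3 q ≠ (sim C).halt := ph_ne_halt C (by decide)
        have hprog3 : (sim C).prog (ph 3 q) = CMInstr.inc j (ph 0 k) := by
          rw [sim_prog]; simp [prog0, hprog]
        have h3 : (sim C).stepFn (ph 3 q, Function.update (fun j' => c j' + 1) j (c j)) =
            (ph 0 k, fun j' => c j' + 1) := by
          simp only [CM.stepFn, if_neg hne3, hprog3]
          congr 1
          funext j'
          by_cases hj : j' = j <;> simp [Function.update_apply, hj, hc0]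
        show (sim C).stepFn ((sim C).stepFn ((sim C).stepFn _)) = _
        rw [h1, h2, h3]
        simp [liftCfg, CM.stepFn, hq, hprog, hcj]

lemma step_sim_mid (C : CM z h) (q : Fin h) (c : Fin z → ℕ) (hq : q ≠ C.halt)
    (r : ℕ) (h1 : 0 < r) (h2 : r < cost C q) :
    ((sim C).stepFn^[r] (liftCfg (q, c))).1 ≠ (sim C).halt := by
  rcases hprog : C.prog q with ⟨j, l⟩ | ⟨j, l, k⟩
  · have : cost C q = 1 := by simp [cost, hq, hprog]
    omega
  · have hc3 : cost C q = 3 := by simp [cost, hq, hprog]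
    have hne : ph 0 q ≠ (sim C).halt := by
      rw [sim_halt]; intro hc; exact hq (ph_inj.mp hc).2
    have h1' : (sim C).stepFn (liftCfg (q, c)) =
        (ph 1 q, Function.update (fun j' => c j' + 1) j (c j)) := by
      simp only [liftCfg, CM.stepFn, if_neg hne, sim_prog, prog0, hprog, reduceIte]
      simp
    rw [hc3] at h2
    interval_cases r
    · rw [Function.iterate_one, h1']
      exact ph_ne_halt C (by decide)
    · show ((sim C).stepFn ((sim C).stepFn _)).1 ≠ _
      rw [h1']
      have hne1 : ph 1 q ≠ (sim C).halt := ph_ne_halt C (by decide)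
      have hprog1 : (sim C).prog (ph 1 q) = CMInstr.dec j (ph 2 q) (ph 3 q) := by
        rw [sim_prog]; simp [prog0, hprog]
      simp only [CM.stepFn, if_neg hne1, hprog1]
      split
      · exact ph_ne_halt C (by decide)
      · exact ph_ne_halt C (by decide)


/-! ### Invariant -/

def Inv (C : CM z h) (qc : Fin (4 * h) × (Fin z → ℕ)) : Prop :=
  (∀ j', 0 < qc.2 j') ∨
    ∃ i j l k, (qc.1 = ph 1 i ∨ qc.1 = ph 2 i ∨ qc.1 = ph 3 i) ∧
      C.prog i = CMInstr.dec j l k ∧ ∀ j', j' ≠ j → 0 < qc.2 j'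

lemma decode (q : Fin (4 * h)) : ∃ p i, q = ph p i :=
  ⟨(finProdFinEquiv.symm q).1, (finProdFinEquiv.symm q).2, by
    rw [ph, Prod.mk.eta, Equiv.apply_symm_apply]⟩

lemma inv_elim {C : CM z h} {p : Fin 4} {i : Fin h} {c : Fin z → ℕ}
    (hI : Inv C (ph p i, c)) :
    (∀ j', 0 < c j') ∨
      ((p = 1 ∨ p = 2 ∨ p = 3) ∧
        ∃ j l k, C.prog i = CMInstr.dec j l k ∧ ∀ j', j' ≠ j → 0 < c j') := by
  rcases hI with hall | ⟨i', j0, l0, k0, hq, hp0, hx⟩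
  · exact Or.inl hall
  · right
    rcases hq with hq | hq | hq <;> obtain ⟨hp, hi⟩ := ph_inj.mp hq
    · exact ⟨Or.inl hp, j0, l0, k0, by rw [hi]; exact hp0, hx⟩
    · exact ⟨Or.inr (Or.inl hp), j0, l0, k0, by rw [hi]; exact hp0, hx⟩
    · exact ⟨Or.inr (Or.inr hp), j0, l0, k0, by rw [hi]; exact hp0, hx⟩

lemma pos_update_inc {c : Fin z → ℕ} {j : Fin z} (hpos : ∀ j', j' ≠ j → 0 < c j') :
    ∀ j', 0 < Function.update c j (c j + 1) j' := by
  intro j'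
  by_cases hj : j' = j
  · subst hj; simp
  · simpa [Function.update_apply, hj] using hpos j' hj

lemma prog0_inc0 {C : CM z h} {i : Fin h} {j : Fin z} {l : Fin h}
    (hp : C.prog i = CMInstr.inc j l) : prog0 C 0 i = CMInstr.inc j (ph 0 l) := by
  simp [prog0, hp]

lemma prog0_inc_other {C : CM z h} {i : Fin h} {j : Fin z} {l : Fin h} {p : Fin 4}
    (hp : C.prog i = CMInstr.inc j l) (hne : p ≠ 0) :
    prog0 C p i = CMInstr.inc j (ph 0 C.halt) := by
  simp [prog0, hp, hne]

lemma prog0_dec0 {C : CM z h} {i : Fin h} {j : Fin z} {l k : Fin h}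
    (hp : C.prog i = CMInstr.dec j l k) : prog0 C 0 i = CMInstr.dec j (ph 1 i) (ph 1 i) := by
  simp [prog0, hp]

lemma prog0_dec1 {C : CM z h} {i : Fin h} {j : Fin z} {l k : Fin h}
    (hp : C.prog i = CMInstr.dec j l k) : prog0 C 1 i = CMInstr.dec j (ph 2 i) (ph 3 i) := by
  simp [prog0, hp]

lemma prog0_dec2 {C : CM z h} {i : Fin h} {j : Fin z} {l k : Fin h}
    (hp : C.prog i = CMInstr.dec j l k) : prog0 C 2 i = CMInstr.inc j (ph 0 l) := by
  simp [prog0, hp]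

lemma prog0_dec3 {C : CM z h} {i : Fin h} {j : Fin z} {l k : Fin h}
    (hp : C.prog i = CMInstr.dec j l k) : prog0 C 3 i = CMInstr.inc j (ph 0 k) := by
  simp [prog0, hp]

lemma sim_dec_safe (C : CM z h) (qc : Fin (4 * h) × (Fin z → ℕ)) (hI : Inv C qc)
    {j : Fin z} {l k : Fin (4 * h)} (hd : (sim C).prog qc.1 = CMInstr.dec j l k) :
    ∀ j', j' ≠ j → 0 < qc.2 j' := by
  obtain ⟨q, c⟩ := qc
  obtain ⟨p, i, rfl⟩ := decode q
  rcases inv_elim hI with hall | ⟨hp, j0, l0, k0, hdec, hx⟩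
  · exact fun j' _ => hall j'
  · rw [sim_prog] at hd
    rcases hp with rfl | rfl | rfl
    · rw [prog0_dec1 hdec] at hd
      obtain ⟨hj, -, -⟩ := CMInstr.dec.inj hd
      intro j' hj'
      exact hx j' (by rw [hj]; exact hj')
    · rw [prog0_dec2 hdec] at hd; cases hd
    · rw [prog0_dec3 hdec] at hd; cases hd

lemma inv_step (C : CM z h) (qc : Fin (4 * h) × (Fin z → ℕ)) (hI : Inv C qc) :
    Inv C ((sim C).stepFn qc) := by
  by_cases hh : qc.1 = (sim C).halt
  · simpa [CM.stepFn, hh] using hI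
  obtain ⟨q, c⟩ := qc
  obtain ⟨p, i, rfl⟩ := decode q
  rcases hprog : C.prog i with ⟨j, l⟩ | ⟨j, l, k⟩
  · -- the simulated instruction at `i` is an `inc`; all counters are positive
    have hpos : ∀ j', 0 < c j' := by
      rcases inv_elim hI with hall | ⟨hp, j0, l0, k0, hdec, hx⟩
      · exact hall
      · rw [hprog] at hdec; cases hdec
    by_cases hp0 : p = 0
    · subst hp0
      simp only [CM.stepFn, if_neg hh, sim_prog, prog0_inc0 hprog]
      left
      exact pos_update_inc (fun j' _ => hpos j')
    · simp only [CM.stepFn, if_neg hh, sim_prog, prog0_inc_other hprog hp0]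
      left
      exact pos_update_inc (fun j' _ => hpos j')
  · rcases inv_elim hI with hall | ⟨hp, j0, l0, k0, hdec, hx⟩
    · -- all counters positive; need to know the phase
      have hp4 : p = 0 ∨ p = 1 ∨ p = 2 ∨ p = 3 := by fin_cases p <;> simp
      rcases hp4 with rfl | rfl | rfl | rfl
      · simp only [CM.stepFn, if_neg hh, sim_prog, prog0_dec0 hprog, if_pos (hall j)]
        right
        refine ⟨i, j, l, k, Or.inl rfl, hprog, ?_⟩
        intro j' hj'
        simpa [Function.update_apply, hj'] using hall j'
      · simp only [CM.stepFn, if_neg hh, sim_prog, prog0_dec1 hprog]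
        split
        · right
          refine ⟨i, j, l, k, Or.inr (Or.inl rfl), hprog, ?_⟩
          intro j' hj'
          simpa [Function.update_apply, hj'] using hall j'
        · right
          exact ⟨i, j, l, k, Or.inr (Or.inr rfl), hprog, fun j' _ => hall j'⟩
      · simp only [CM.stepFn, if_neg hh, sim_prog, prog0_dec2 hprog]
        left
        exact pos_update_inc (fun j' _ => hall j')
      · simp only [CM.stepFn, if_neg hh, sim_prog, prog0_dec3 hprog]
        left
        exact pos_update_inc (fun j' _ => hall j')
    · -- second invariant disjunct; here `p ∈ {1,2,3}`
      rw [hprog] at hdec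
      obtain ⟨hj0, -, -⟩ := CMInstr.dec.inj hdec
      subst hj0
      rcases hp with rfl | rfl | rfl
      · simp only [CM.stepFn, if_neg hh, sim_prog, prog0_dec1 hprog]
        split
        · right
          refine ⟨i, j, l, k, Or.inr (Or.inl rfl), hprog, ?_⟩
          intro j' hj'
          simpa [Function.update_apply, hj'] using hx j' hj'
        · right
          exact ⟨i, j, l, k, Or.inr (Or.inr rfl), hprog, hx⟩
      · simp only [CM.stepFn, if_neg hh, sim_prog, prog0_dec2 hprog]
        left
        exact pos_update_inc hx
      · simp only [CM.stepFn, if_neg hh, sim_prog, prog0_dec3 hprog]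
        left
        exact pos_update_inc hx

lemma inv_run (C : CM z h) (v : Fin z → ℕ) (s : ℕ) :
    Inv C ((sim C).runFrom (repInit (sim C) v) s) := by
  induction s with
  | zero =>
      left
      intro j'
      simp [CM.runFrom, repInit]
  | succ n ih =>
      have hstep : (sim C).runFrom (repInit (sim C) v) (n + 1) =
          (sim C).stepFn ((sim C).runFrom (repInit (sim C) v) n) := by
        simp [CM.runFrom, Function.iterate_succ_apply']
      rw [hstep]
      exact inv_step C _ ih

/-! ### Timing -/

def simTime (C : CM z h) (v : Fin z → ℕ) : ℕ → ℕ
  | 0 => 0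
  | t + 1 => simTime C v t + cost C (C.run v t).1

lemma run_sim (C : CM z h) (v : Fin z → ℕ) (t : ℕ) :
    (sim C).runFrom (repInit (sim C) v) (simTime C v t) = liftCfg (C.run v t) := by
  induction t with
  | zero =>
      show (sim C).stepFn^[0] _ = _
      simp only [Function.iterate_zero, id_eq]
      unfold repInit liftCfg CM.run CM.initCfg
      rfl
  | succ t ih =>
      show (sim C).stepFn^[simTime C v t + cost C (C.run v t).1] _ = _
      rw [add_comm, Function.iterate_add_apply]
      have ih' : (sim C).stepFn^[simTime C v t] (repInit (sim C) v) = liftCfg (C.run v t) := ih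
      rw [ih']
      have hstep := step_sim C (C.run v t).1 (C.run v t).2
      have hrun : C.run v (t + 1) = C.stepFn (C.run v t) := by
        simp [CM.run, Function.iterate_succ_apply']
      rw [hrun]
      exact hstep

lemma simTime_zero (C : CM z h) (v : Fin z → ℕ) : simTime C v 0 = 0 := rfl

lemma simTime_mono (C : CM z h) (v : Fin z → ℕ) : StrictMono (simTime C v) := by
  apply strictMono_nat_of_lt_succ
  intro t
  have := cost_pos C (C.run v t).1
  show simTime C v t < simTime C v t + cost C (C.run v t).1
  omega

lemma simTime_step (C : CM z h) (v : Fin z → ℕ) (t : ℕ) :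
    simTime C v (t + 1) ≤ simTime C v t + 3 := by
  have := cost_le C (C.run v t).1
  show simTime C v t + cost C (C.run v t).1 ≤ _
  omega

lemma simTime_le (C : CM z h) (v : Fin z → ℕ) (t : ℕ) : simTime C v t ≤ 3 * t := by
  induction t with
  | zero => simp [simTime]
  | succ t ih =>
      have := simTime_step C v t
      omega

lemma before_halt (C : CM z h) (v : Fin z → ℕ) (t : ℕ)
    (hnh : ∀ u, u < t → (C.run v u).1 ≠ C.halt) :
    ∀ s, s < simTime C v t →
      ((sim C).runFrom (repInit (sim C) v) s).1 ≠ (sim C).halt := by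
  induction t with
  | zero => intro s hs; simp [simTime] at hs
  | succ t ih =>
      intro s hs
      by_cases hlt : s < simTime C v t
      · exact ih (fun u hu => hnh u (by omega)) s hlt
      · have h1 : simTime C v t ≤ s := not_lt.mp hlt
        have hq : (C.run v t).1 ≠ C.halt := hnh t (by omega)
        have hst : simTime C v (t + 1) = simTime C v t + cost C (C.run v t).1 := rfl
        have hrlt : s - simTime C v t < cost C (C.run v t).1 := by omega
        rcases Nat.eq_zero_or_pos (s - simTime C v t) with h0 | hpos
        · have hse : s = simTime C v t := by omega
          rw [hse, run_sim]
          simp only [liftCfg, sim_halt]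
          intro hc
          exact hq (ph_inj.mp hc).2
        · obtain ⟨r, hr0, hrlt', rfl⟩ :
              ∃ r, 0 < r ∧ r < cost C (C.run v t).1 ∧ s = simTime C v t + r :=
            ⟨s - simTime C v t, hpos, hrlt, by omega⟩
          have heq : (sim C).runFrom (repInit (sim C) v) (simTime C v t + r) =
              (sim C).stepFn^[r] (liftCfg (C.run v t)) := by
            show (sim C).stepFn^[simTime C v t + r] _ = _
            rw [add_comm, Function.iterate_add_apply]
            have hrs : (sim C).stepFn^[simTime C v t] (repInit (sim C) v) =
                liftCfg (C.run v t) := run_sim C v t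
            rw [hrs]
          rw [heq]
          exact step_sim_mid C (C.run v t).1 (C.run v t).2 hq r hr0 hrlt'


/-- For every counter machine `C` with `z` counters there is a
counter machine `C'` with `z` counters that simulates `C` in linear time (each
step of `C` costs at most `d` steps of `C'`, for a constant `d`; `C'` halts,
under the `y + 1` representation of counter values, with output `y` whenever `C`
halts with output `y`) and such that whenever `C'` executes a decrement
instruction on some counter, every other counter of `C'` holds a positive value. -/
theorem counter_machine_positive_decrement_normal_form (z h : ℕ) (C : CM z h) :
    ∃ (h' : ℕ) (C' : CM z h') (d : ℕ), 1 ≤ d ∧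
      C'.inputs = C.inputs ∧ C'.output = C.output ∧
      ∀ v : Fin z → ℕ,
        (∃ a : ℕ → ℕ, a 0 = 0 ∧ StrictMono a ∧ (∀ t, a (t + 1) ≤ a t + d) ∧
          (∀ t j, (C'.runFrom (repInit C' v) (a t)).2 j = (C.run v t).2 j + 1) ∧
          (∀ t, (C.run v t).1 = C.halt ↔
            (C'.runFrom (repInit C' v) (a t)).1 = C'.halt)) ∧
        (∀ (s : ℕ) (j : Fin z) (l k : Fin h'),
          (C'.runFrom (repInit C' v) s).1 ≠ C'.halt →
          C'.prog (C'.runFrom (repInit C' v) s).1 = CMInstr.dec j l k →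
          ∀ j', j' ≠ j → 0 < (C'.runFrom (repInit C' v) s).2 j') ∧
        (∀ t y, C.HaltsIn v t y →
          ∃ t', t' ≤ d * (t + 1) ∧
            (C'.runFrom (repInit C' v) t').1 = C'.halt ∧
            (∀ s, s < t' → (C'.runFrom (repInit C' v) s).1 ≠ C'.halt) ∧
            (C'.runFrom (repInit C' v) t').2 C'.output = y + 1) := by
  refine ⟨4 * h, sim C, 3, by omega, rfl, rfl, ?_⟩
  intro v
  refine ⟨⟨simTime C v, rfl, simTime_mono C v, simTime_step C v, ?_, ?_⟩, ?_, ?_⟩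
  · intro t j
    rw [run_sim C v t]
    rfl
  · intro t
    rw [run_sim C v t]
    show (C.run v t).1 = C.halt ↔ ph 0 (C.run v t).1 = (sim C).halt
    rw [sim_halt]
    constructor
    · intro hq; exact ph_inj.mpr ⟨rfl, hq⟩
    · intro hq; exact (ph_inj.mp hq).2
  · intro s j l k hne hd j' hj'
    exact sim_dec_safe C _ (inv_run C v s) hd j' hj'
  · rintro t y ⟨h1, h2, h3⟩
    refine ⟨simTime C v t, ?_, ?_, ?_, ?_⟩
    · have := simTime_le C v t; omega
    · rw [run_sim C v t]
      show ph 0 (C.run v t).1 = (sim C).halt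
      rw [sim_halt]
      exact ph_inj.mpr ⟨rfl, h1⟩
    · exact before_halt C v t h2
    · rw [run_sim C v t]
      show (C.run v t).2 C.output + 1 = y + 1
      rw [h3]


end PaperSNP
end

section
/- There is no universal extended spiking neural P system without delay that has only 3 neurons, generalised input and standard output (the output neuron firing at most a constant number of times, independent of the input). -/
open scoped Classical

namespace PaperSNP

/-- A firing rule `E / s^b → s^p` over the unary spike alphabet. -/
structure FireRule where
  E : RegularExpression Unit
  b : ℕ
  p : ℕ

/-- The word consisting of `n` spikes. -/
def spk (n : ℕ) : List Unit := List.replicate n ()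

/-- An (extended) spiking neural P system without delay, with `m` neurons.
Neuron `i` initially holds `init i` spikes, has firing rules `fire i` and
forgetting rules `forget i` (a forgetting rule is given by the number `e`
of spikes it removes). -/
structure SNP (m : ℕ) where
  syn : Finset (Fin m × Fin m)
  inp : Fin m
  out : Fin m
  init : Fin m → ℕ
  fire : Fin m → Set FireRule
  forget : Fin m → Set ℕ

/-- Well-formedness: synapses join distinct neurons, rule sets are finite,
every firing rule `E/s^b → s^p` has `b ≥ p ≥ 1`, and every forgetting rule
`s^e → λ` has `e ≥ 1` with `s^e ∉ L(E)` for each firing rule of the neuron. -/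
def SNP.WF {m : ℕ} (P : SNP m) : Prop :=
  (∀ e ∈ P.syn, e.1 ≠ e.2) ∧
  (∀ i, (P.fire i).Finite) ∧ (∀ i, (P.forget i).Finite) ∧
  (∀ i, ∀ r ∈ P.fire i, 1 ≤ r.p ∧ r.p ≤ r.b) ∧
  (∀ i, ∀ e ∈ P.forget i, 1 ≤ e ∧ ∀ r ∈ P.fire i, spk e ∉ r.E.matches')

/-- A standard system: every firing rule emits exactly one spike. -/
def SNP.Standard {m : ℕ} (P : SNP m) : Prop :=
  ∀ i, ∀ r ∈ P.fire i, r.p = 1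

/-- A configuration: spike counts of the neurons and the unread input suffix. -/
structure Config (m : ℕ) where
  sp : Fin m → ℕ
  w : List Bool

/-- An action of a single neuron at a timestep: apply a firing rule,
apply a forgetting rule (removing `e` spikes), or do nothing. -/
abbrev Act := Option (FireRule ⊕ ℕ)

/-- Applicability of a firing rule in neuron `i` holding `c` spikes. -/
def FireApp {m : ℕ} (P : SNP m) (i : Fin m) (r : FireRule) (c : ℕ) : Prop :=
  r ∈ P.fire i ∧ r.b ≤ c ∧ spk c ∈ r.E.matches'

/-- Applicability of a forgetting rule `s^e → λ` in neuron `i` holding `c` spikes. -/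
def ForgetApp {m : ℕ} (P : SNP m) (i : Fin m) (e : ℕ) (c : ℕ) : Prop :=
  e ∈ P.forget i ∧ c = e

/-- An action is valid for neuron `i` holding `c` spikes: a rule may (and must)
be applied exactly when some rule is applicable. -/
def ActValid {m : ℕ} (P : SNP m) (i : Fin m) (c : ℕ) : Act → Prop
  | none => (∀ r, ¬ FireApp P i r c) ∧ (∀ e, ¬ ForgetApp P i e c)
  | some (Sum.inl r) => FireApp P i r c
  | some (Sum.inr e) => ForgetApp P i e c

/-- Number of spikes consumed by an action. -/
def consumed : Act → ℕ
  | none => 0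
  | some (Sum.inl r) => r.b
  | some (Sum.inr e) => e

/-- Number of spikes emitted along each outgoing synapse by an action. -/
def emitted : Act → ℕ
  | some (Sum.inl r) => r.p
  | some (Sum.inr _) => 0
  | none => 0

/-- Spikes received by neuron `i` from the other neurons, given the actions. -/
def received {m : ℕ} (P : SNP m) (a : Fin m → Act) (i : Fin m) : ℕ :=
  ∑ j : Fin m, if (j, i) ∈ P.syn then emitted (a j) else 0

/-- The spike entering the input neuron from the environment (1 iff the
currently read input symbol is a 1). -/
def inputSpike {m : ℕ} (P : SNP m) (w : List Bool) (i : Fin m) : ℕ :=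
  if i = P.inp ∧ w.head? = some true then 1 else 0

/-- One synchronous computation step of the system under actions `a`. -/
def SStep {m : ℕ} (P : SNP m) (a : Fin m → Act) (c c' : Config m) : Prop :=
  (∀ i, ActValid P i (c.sp i) (a i)) ∧
  (∀ i, c'.sp i = c.sp i - consumed (a i) + received P a i + inputSpike P c.w i) ∧
  c'.w = c.w.tail

/-- Initial configuration on input word `w`. -/
def SNP.initConfig {m : ℕ} (P : SNP m) (w : List Bool) : Config m := ⟨P.init, w⟩

/-- A computation (run) of the system on input word `w`. -/
structure Run {m : ℕ} (P : SNP m) (w : List Bool) where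
  cfg : ℕ → Config m
  act : ℕ → Fin m → Act
  init_eq : cfg 0 = P.initConfig w
  step : ∀ t, SStep P (act t) (cfg t) (cfg (t + 1))

/-- The output neuron fires at timestep `t` of the run. -/
def FiresAt {m : ℕ} {P : SNP m} {w : List Bool} (ρ : Run P w) (t : ℕ) : Prop :=
  ∃ r : FireRule, ρ.act t P.out = some (Sum.inl r)

/-- Exactly `x` spikes are sent out of the output neuron at timestep `t`. -/
def SendsAt {m : ℕ} {P : SNP m} {w : List Bool} (ρ : Run P w) (t x : ℕ) : Prop :=
  ∃ r : FireRule, ρ.act t P.out = some (Sum.inl r) ∧ r.p = x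

/-- `t1 < t2` are the first two timesteps at which the event `F` happens and
`z = t2 - t1` (the output value). -/
def OutputIs (F : ℕ → Prop) (z : ℕ) : Prop :=
  ∃ t1 t2, t1 < t2 ∧ F t1 ∧ F t2 ∧ (∀ s, s < t2 → s ≠ t1 → ¬ F s) ∧ z = t2 - t1

/-- As `OutputIs`, with moreover the second event occurring by timestep `T`
(the whole computation takes at most `T` timesteps). -/
def OutWithin (F : ℕ → Prop) (z T : ℕ) : Prop :=
  ∃ t1 t2, t1 < t2 ∧ F t1 ∧ F t2 ∧ (∀ s, s < t2 → s ≠ t1 → ¬ F s) ∧ z = t2 - t1 ∧ t2 ≤ T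

/-- The system outputs `z` on input `w` (standard output convention: `z` is the
number of timesteps between the first and second firings of the output neuron). -/
def Outputs {m : ℕ} (P : SNP m) (w : List Bool) (z : ℕ) : Prop :=
  ∃ ρ : Run P w, OutputIs (FiresAt ρ) z

/-- Generalised output with constant `x`: `z` is the number of timesteps between
the first and second timesteps at which exactly `x` spikes leave the output neuron. -/
def GenOutputs {m : ℕ} (P : SNP m) (x : ℕ) (w : List Bool) (z : ℕ) : Prop :=
  ∃ ρ : Run P w, OutputIs (fun t => SendsAt ρ t x) z

/-- `phi x v`: the `x`-th partial recursive function of a fixed Gödel enumeration,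
applied to the (encoded) tuple `v` of natural numbers. -/
def phi (x : ℕ) (v : List ℕ) : Part ℕ :=
  Nat.Partrec.Code.eval (Denumerable.ofNat Nat.Partrec.Code x) (Encodable.encode v)

/-- Universality of a system `P` with respect to an output convention `Out`:
there are recursive (computable) functions `f` and `g` such that for all `x` and
all argument tuples `v`, `phi x v = f (P(g(x, v)))`, the two sides being defined
together. -/
def UniversalVia {m : ℕ} (P : SNP m) (Out : List Bool → ℕ → Prop) : Prop :=
  ∃ (f : ℕ → ℕ) (g : ℕ × List ℕ → List Bool),
    Computable f ∧ Computable g ∧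
    ∀ (x : ℕ) (v : List ℕ),
      (∀ z, Out (g (x, v)) z → phi x v = Part.some (f z)) ∧
      ((phi x v).Dom → ∃ z, Out (g (x, v)) z)

/-- Universality with the standard output convention. -/
def Universal {m : ℕ} (P : SNP m) : Prop := UniversalVia P (Outputs P)

/-!
In a three-neuron system each of the two neurons other than the output neuron has at most one
synapse to the other, so the spikes they hold only grow through the input and through the
boundedly many firings of the output neuron: their counts stay below a bound linear in the
length of the input. The output neuron's behaviour depends on its spike count exactly below a
threshold and periodically above it (unary regular languages are eventually periodic), and above
the threshold it loses spikes only by firing. So once the input is read, only polynomially many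
essentially different configurations occur between firings, and a repetition is a loop that can
be cut out of the run. Every output is therefore also produced by a run whose second firing comes
before a computable bound `T(|w|)`. For a universal system, `φ_x(y)` would then always lie in
`f([0, T(|g(x, y)|)])`, and Kleene's recursion theorem yields a program escaping this set.
-/

open Filter Finset

section EventuallyPeriodic

def PeriodicFrom (S : Set ℕ) (N p : ℕ) : Prop := ∀ n, N ≤ n → (n + p ∈ S ↔ n ∈ S)

def EventuallyPeriodic (S : Set ℕ) : Prop := ∃ N p, 0 < p ∧ PeriodicFrom S N p

variable {S T : Set ℕ} {N p : ℕ}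

theorem PeriodicFrom.add_mul_mem_iff (h : PeriodicFrom S N p) (k : ℕ) {n : ℕ} (hn : N ≤ n) :
    n + k * p ∈ S ↔ n ∈ S := by
  induction k with
  | zero => simp
  | succ k ih => rw [Nat.succ_mul, ← add_assoc, h _ (by omega), ih]

theorem PeriodicFrom.mono (h : PeriodicFrom S N p) {N' p' : ℕ} (hN : N ≤ N') (hp : p ∣ p') :
    PeriodicFrom S N' p' := by
  obtain ⟨k, rfl⟩ := hp
  intro n hn
  rw [mul_comm, h.add_mul_mem_iff k (hN.trans hn)]

theorem PeriodicFrom.mem_iff_of_modEq (h : PeriodicFrom S N p) {a b : ℕ} (ha : N ≤ a)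
    (hb : N ≤ b) (hab : a ≡ b [MOD p]) : a ∈ S ↔ b ∈ S := by
  wlog hle : a ≤ b generalizing a b
  · exact (this hb ha hab.symm (by omega)).symm
  obtain ⟨k, hk⟩ := (Nat.modEq_iff_dvd' hle).1 hab
  rw [show b = a + k * p by rw [mul_comm, ← hk]; omega, h.add_mul_mem_iff k ha]

namespace EventuallyPeriodic

theorem of_finite (hS : S.Finite) : EventuallyPeriodic S := by
  obtain ⟨k, hk⟩ := hS.bddAbove
  refine ⟨k + 1, 1, one_pos, fun n hn => iff_of_false ?_ ?_⟩ <;>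
    exact fun hmem => absurd (hk hmem) (by omega)

theorem union (hS : EventuallyPeriodic S) (hT : EventuallyPeriodic T) :
    EventuallyPeriodic (S ∪ T) := by
  obtain ⟨N₁, p₁, hp₁, h₁⟩ := hS
  obtain ⟨N₂, p₂, hp₂, h₂⟩ := hT
  refine ⟨max N₁ N₂, p₁ * p₂, Nat.mul_pos hp₁ hp₂, fun n hn => ?_⟩
  simp only [Set.mem_union,
    h₁.mono (le_max_left N₁ N₂) (dvd_mul_right p₁ p₂) n hn,
    h₂.mono (le_max_right N₁ N₂) (dvd_mul_left p₂ p₁) n hn]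

open scoped Pointwise in
theorem add (hS : EventuallyPeriodic S) (hT : EventuallyPeriodic T) :
    EventuallyPeriodic (S + T) := by
  obtain ⟨N₁, p₁, hp₁, h₁⟩ := hS
  obtain ⟨N₂, p₂, hp₂, h₂⟩ := hT
  set N := max N₁ N₂
  set p := p₁ * p₂
  have hS' : PeriodicFrom S N p := h₁.mono (le_max_left _ _) (dvd_mul_right _ _)
  have hT' : PeriodicFrom T N p := h₂.mono (le_max_right _ _) (dvd_mul_left _ _)
  refine ⟨2 * N + p, p, Nat.mul_pos hp₁ hp₂, fun n hn => ?_⟩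
  simp only [Set.mem_add]
  constructor
  · rintro ⟨a, ha, b, hb, hab⟩
    -- one of the two summands of `n + p` is at least `N + p`, and can give back `p`
    by_cases hap : N + p ≤ a
    · refine ⟨a - p, (hS' (a - p) (by omega)).1 ?_, b, hb, by omega⟩
      rwa [Nat.sub_add_cancel (by omega)]
    · refine ⟨a, ha, b - p, (hT' (b - p) (by omega)).1 ?_, by omega⟩
      rwa [Nat.sub_add_cancel (by omega)]
  · rintro ⟨a, ha, b, hb, rfl⟩
    by_cases haN : N ≤ a
    · exact ⟨a + p, (hS' a haN).2 ha, b, hb, by omega⟩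
    · exact ⟨a, ha, b + p, (hT' b (by omega)).2 hb, by omega⟩

theorem exists_common {ι : Type*} {s : Set ι} (hs : s.Finite) {S : ι → Set ℕ}
    (h : ∀ i ∈ s, EventuallyPeriodic (S i)) :
    ∃ N p, 0 < p ∧ ∀ i ∈ s, PeriodicFrom (S i) N p := by
  induction s, hs using Set.Finite.induction_on with
  | empty => exact ⟨0, 1, one_pos, by simp⟩
  | @insert a s _ _ ih =>
    obtain ⟨N, p, hp, hN⟩ := ih fun i hi => h i (Set.mem_insert_of_mem a hi)
    obtain ⟨Na, pa, hpa, ha⟩ := h a (Set.mem_insert a s)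
    refine ⟨max N Na, p * pa, Nat.mul_pos hp hpa, ?_⟩
    rintro i (rfl | hi)
    · exact ha.mono (le_max_right _ _) (dvd_mul_left _ _)
    · exact (hN i hi).mono (le_max_left _ _) (dvd_mul_right _ _)

theorem of_addSubmonoid (S : AddSubmonoid ℕ) : EventuallyPeriodic S := by
  by_cases hS : ∃ s ∈ S, 0 < s
  · obtain ⟨s, hs, hs0⟩ := hS
    -- along each residue class mod `s`, membership in `S` is monotone, hence eventually constant
    have hmono : ∀ r k j, k ≤ j → r + k * s ∈ S → r + j * s ∈ S := by
      intro r k j hkj hk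
      induction j, hkj using Nat.le_induction with
      | base => exact hk
      | succ j _ ih => rw [Nat.succ_mul, ← add_assoc]; exact S.add_mem ih hs
    have hconst : ∀ r, ∀ᶠ k in atTop, (r + (k + 1) * s ∈ S ↔ r + k * s ∈ S) := by
      intro r
      by_cases h : ∃ k, r + k * s ∈ S
      · obtain ⟨k, hk⟩ := h
        exact eventually_atTop.2 ⟨k, fun j hj =>
          iff_of_true (hmono r k _ (by omega) hk) (hmono r k j hj hk)⟩
      · push Not at h
        exact Eventually.of_forall fun k => iff_of_false (h _) (h _)
    obtain ⟨K, hK⟩ := eventually_atTop.1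
      ((eventually_all_finset (Finset.range s)).2 fun r _ => hconst r)
    refine ⟨K * s, s, hs0, fun n hn => ?_⟩
    have := hK (n / s) ((Nat.le_div_iff_mul_le hs0).2 hn) (n % s)
      (Finset.mem_range.2 (Nat.mod_lt n hs0))
    rwa [Nat.succ_mul, ← add_assoc, Nat.mod_add_div'] at this
  · push Not at hS
    exact .of_finite ((Set.finite_singleton 0).subset fun n hn => by
      simpa using hS n hn)

end EventuallyPeriodic

end EventuallyPeriodic

theorem spk_length (l : List Unit) : spk l.length = l :=
  (List.eq_replicate_iff.2 ⟨rfl, fun _ _ => rfl⟩).symm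

theorem spk_add (a b : ℕ) : spk (a + b) = spk a ++ spk b := List.replicate_add a b ()

open scoped Pointwise in
theorem setOf_spk_mem_mul (L₁ L₂ : Language Unit) :
    {n | spk n ∈ L₁ * L₂} = {n | spk n ∈ L₁} + {n | spk n ∈ L₂} := by
  ext n
  simp only [Set.mem_ofPred_eq, Set.mem_add, Language.mem_mul]
  constructor
  · rintro ⟨u, hu, v, hv, huv⟩
    refine ⟨u.length, by rwa [spk_length], v.length, by rwa [spk_length], ?_⟩
    simpa [spk] using congrArg List.length huv
  · rintro ⟨a, ha, b, hb, rfl⟩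
    exact ⟨spk a, ha, spk b, hb, (spk_add a b).symm⟩

def kstarSpikeCounts (L : Language Unit) : AddSubmonoid ℕ where
  carrier := {n | spk n ∈ KStar.kstar L}
  add_mem' {a b} ha hb := by
    change spk (a + b) ∈ KStar.kstar L
    rw [spk_add, ← kstar_mul_kstar]
    exact Language.append_mem_mul ha hb
  zero_mem' := Language.nil_mem_kstar L

theorem eventuallyPeriodic_matches (E : RegularExpression Unit) :
    EventuallyPeriodic {n | spk n ∈ E.matches'} := by
  induction E with
  | zero => exact .of_finite (by simp [RegularExpression.matches'])
  | epsilon =>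
    refine .of_finite ((Set.finite_singleton 0).subset fun n hn => ?_)
    simpa [RegularExpression.matches', spk] using hn
  | char a =>
    refine .of_finite ((Set.finite_singleton 1).subset fun n hn => ?_)
    simpa [spk] using congrArg List.length hn
  | plus E F hE hF => exact hE.union hF
  | comp E F hE hF =>
    rw [RegularExpression.matches', setOf_spk_mem_mul]
    exact hE.add hF
  | star E _ => exact .of_addSubmonoid (kstarSpikeCounts E.matches')

section Runs

variable {m : ℕ} {P : SNP m} {w : List Bool}

theorem consumed_le_of_actValid {i : Fin m} {c : ℕ} {a : Act} (h : ActValid P i c a) :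
    consumed a ≤ c := by
  match a, h with
  | none, _ => exact Nat.zero_le c
  | some (.inl _), h => exact h.2.1
  | some (.inr _), h => exact h.2.ge

theorem emitted_le_consumed (hWF : P.WF) {i : Fin m} {c : ℕ} {a : Act} (h : ActValid P i c a) :
    emitted a ≤ consumed a := by
  match a, h with
  | none, _ => exact le_rfl
  | some (.inl r), h => exact (hWF.2.2.2.1 i r h.1).2
  | some (.inr _), _ => exact Nat.zero_le _

namespace Run

variable (ρ : Run P w)

theorem cfg_w (t : ℕ) : (ρ.cfg t).w = w.drop t := by
  induction t with
  | zero => rw [ρ.init_eq]; rfl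
  | succ t ih => rw [(ρ.step t).2.2, ih, List.tail_drop]

theorem valid (t : ℕ) (i : Fin m) : ActValid P i ((ρ.cfg t).sp i) (ρ.act t i) :=
  (ρ.step t).1 i

theorem sp_succ (t : ℕ) (i : Fin m) :
    (ρ.cfg (t + 1)).sp i = (ρ.cfg t).sp i - consumed (ρ.act t i) + received P (ρ.act t) i
      + inputSpike P (w.drop t) i := by
  rw [(ρ.step t).2.1 i, ρ.cfg_w]

noncomputable def firings (s t : ℕ) : ℕ := #{τ ∈ Ico s t | FiresAt ρ τ}

theorem firings_self (s : ℕ) : ρ.firings s s = 0 := by simp [firings]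

theorem firings_eq_zero {s t : ℕ} (h : ∀ τ, s ≤ τ → τ < t → ¬ FiresAt ρ τ) :
    ρ.firings s t = 0 :=
  card_eq_zero.2 (filter_eq_empty_iff.2 fun τ hτ => h τ (mem_Ico.1 hτ).1 (mem_Ico.1 hτ).2)

theorem mul_firings_succ (B : ℕ) {s t : ℕ} (h : s ≤ t) :
    B * ρ.firings s (t + 1) = B * ρ.firings s t + if FiresAt ρ t then B else 0 := by
  have hIco : Ico s (t + 1) = insert t (Ico s t) := Nat.Ico_succ_right_eq_insert_Ico h
  simp only [firings, hIco, filter_insert]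
  split_ifs <;> simp [mul_add]

end Run

end Runs

section NeuronConstants

variable {m : ℕ} {P : SNP m} {i : Fin m}

def SNP.ConsumesAtMost (P : SNP m) (i : Fin m) (B : ℕ) : Prop :=
  ∀ c a, ActValid P i c a → consumed a ≤ B

def SNP.ActPeriodic (P : SNP m) (i : Fin m) (N p : ℕ) : Prop :=
  0 < p ∧ ∀ c c' a, N ≤ c → N ≤ c' → c ≡ c' [MOD p] → ActValid P i c a → ActValid P i c' a

theorem SNP.WF.exists_rule_bound (hWF : P.WF) (i : Fin m) :
    ∃ B, (∀ r ∈ P.fire i, r.b ≤ B) ∧ ∀ e ∈ P.forget i, e ≤ B := by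
  obtain ⟨B₁, hB₁⟩ := ((hWF.2.1 i).image FireRule.b).bddAbove
  obtain ⟨B₂, hB₂⟩ := (hWF.2.2.1 i).bddAbove
  exact ⟨B₁ + B₂, fun r hr => (hB₁ ⟨r, hr, rfl⟩).trans (Nat.le_add_right _ _),
    fun e he => (hB₂ he).trans (Nat.le_add_left _ _)⟩

theorem SNP.WF.exists_consumesAtMost (hWF : P.WF) (i : Fin m) :
    ∃ B, P.ConsumesAtMost i B := by
  obtain ⟨B, hb, he⟩ := hWF.exists_rule_bound i
  refine ⟨B, fun c a ha => ?_⟩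
  match a, ha with
  | none, _ => exact Nat.zero_le B
  | some (.inl r), ha => exact hb r ha.1
  | some (.inr e), ha => exact he e ha.1

theorem SNP.WF.exists_actPeriodic (hWF : P.WF) (i : Fin m) : ∃ N p, P.ActPeriodic i N p := by
  obtain ⟨B, hb, he⟩ := hWF.exists_rule_bound i
  obtain ⟨N, p, hp, hper⟩ := EventuallyPeriodic.exists_common (hWF.2.1 i)
    (S := fun r => {n | spk n ∈ r.E.matches'}) fun r _ => eventuallyPeriodic_matches r.E
  have hfire : ∀ r c c', N + B + 1 ≤ c → N + B + 1 ≤ c' → c ≡ c' [MOD p] →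
      FireApp P i r c → FireApp P i r c' := fun r c c' hc hc' hcc' ⟨hr, _, hE⟩ =>
    ⟨hr, by have := hb r hr; omega,
      ((hper r hr).mem_iff_of_modEq (by omega) (by omega) hcc').1 hE⟩
  have hforget : ∀ e c, N + B + 1 ≤ c → ¬ ForgetApp P i e c := fun e c hc ⟨he', hce⟩ => by
    have := he e he'
    omega
  refine ⟨N + B + 1, p, hp, fun c c' a hc hc' hcc' ha => ?_⟩
  match a, ha with
  | none, ⟨hnf, _⟩ =>
    exact ⟨fun r hr => hnf r (hfire r c' c hc' hc hcc'.symm hr), fun e => hforget e c' hc'⟩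
  | some (.inl r), ha => exact hfire r c c' hc hc' hcc' ha
  | some (.inr e), ha => exact absurd ha (hforget e c hc)

theorem SNP.ActPeriodic.not_actValid_forget {N p c : ℕ} (h : P.ActPeriodic i N p) (hc : N ≤ c)
    (e : ℕ) : ¬ ActValid P i c (some (.inr e)) := fun he => by
  -- a forgetting rule applies at exactly one spike count, which periodicity would repeat
  have h₁ : c = e := he.2
  have h₂ : c + p = e := (h.2 c (c + p) _ hc (by omega) (Nat.add_mod_right c p).symm he).2
  have := h.1
  omega

end NeuronConstants

section OutputNeuron

variable {m : ℕ} {P : SNP m} {w : List Bool} {B N p : ℕ}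

theorem Run.consumed_out_le (hB : P.ConsumesAtMost P.out B) (hper : P.ActPeriodic P.out N p)
    (ρ : Run P w) {t : ℕ} (hN : N ≤ (ρ.cfg t).sp P.out) :
    consumed (ρ.act t P.out) ≤ if FiresAt ρ t then B else 0 := by
  split_ifs with hF
  · exact hB _ _ (ρ.valid t P.out)
  · have hv := ρ.valid t P.out
    rcases h : ρ.act t P.out with _ | r | e
    · rfl
    · exact absurd ⟨r, h⟩ hF
    · rw [h] at hv
      exact absurd hv (hper.not_actValid_forget hN e)

theorem Run.out_le_add_firings (hB : P.ConsumesAtMost P.out B) (hper : P.ActPeriodic P.out N p)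
    (ρ : Run P w) {s u : ℕ} (hsu : s ≤ u) (h : N + B * ρ.firings s u ≤ (ρ.cfg s).sp P.out) :
    (ρ.cfg s).sp P.out ≤ (ρ.cfg u).sp P.out + B * ρ.firings s u := by
  induction u, hsu using Nat.le_induction with
  | base => simp [Run.firings_self]
  | succ u hsu ih =>
    rw [ρ.mul_firings_succ B hsu] at h ⊢
    have hu := ih (by omega)
    have hcons := ρ.consumed_out_le hB hper (t := u) (by omega)
    have := ρ.sp_succ u P.out
    omega

theorem Run.emitted_out_le (hWF : P.WF) (hB : P.ConsumesAtMost P.out B) (ρ : Run P w) (t : ℕ) :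
    emitted (ρ.act t P.out) ≤ if FiresAt ρ t then B else 0 := by
  have hv := ρ.valid t P.out
  rcases h : ρ.act t P.out with _ | r | e
  · exact Nat.zero_le _
  · rw [h] at hv
    rw [if_pos ⟨r, h⟩]
    exact (emitted_le_consumed hWF hv).trans (hB _ _ hv)
  · exact Nat.zero_le _

end OutputNeuron

section ThreeNeurons

variable {m : ℕ} {P : SNP m} {w : List Bool}

theorem sum_received_eq (P : SNP m) (a : Fin m → Act) (s : Finset (Fin m)) :
    ∑ i ∈ s, received P a i = ∑ j, #{i ∈ s | (j, i) ∈ P.syn} * emitted (a j) := by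
  simp only [received]
  rw [sum_comm]
  exact sum_congr rfl fun j _ => by rw [← sum_filter, sum_const, smul_eq_mul]

theorem sum_inputSpike_drop_le (P : SNP m) (s : Finset (Fin m)) (w : List Bool) (t : ℕ) :
    ∑ i ∈ s, inputSpike P (w.drop t) i ≤ if t < w.length then 1 else 0 := by
  calc ∑ i ∈ s, inputSpike P (w.drop t) i
      ≤ ∑ i ∈ s, if i = P.inp then (if t < w.length then 1 else 0) else 0 := by
        refine sum_le_sum fun i _ => ?_
        simp only [inputSpike, List.head?_drop]
        split_ifs <;> simp_all
    _ ≤ if t < w.length then 1 else 0 := by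
        rw [sum_ite_eq']
        split_ifs <;> simp

variable {P : SNP 3}

/-- Each of the two non-output neurons sends to at most one non-output neuron, as there are no
self-synapses. -/
theorem sum_received_other_le (hWF : P.WF) (a : Fin 3 → Act) :
    ∑ i ∈ univ.erase P.out, received P a i ≤
      ∑ j ∈ univ.erase P.out, emitted (a j) + 2 * emitted (a P.out) := by
  have hcard : #(univ.erase P.out) = 2 := by simp
  rw [sum_received_eq, ← sum_erase_add _ _ (mem_univ P.out)]
  gcongr with j hj
  · refine mul_le_of_le_one_left (Nat.zero_le _) ?_
    calc _ ≤ #((univ.erase P.out).erase j) := card_le_card fun i hi => by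
          rw [mem_filter] at hi
          exact mem_erase.2 ⟨fun hij => hWF.1 _ hi.2 hij.symm, hi.1⟩
      _ = 1 := by rw [card_erase_of_mem hj, hcard]
  · exact (card_filter_le _ _).trans hcard.le

noncomputable def Run.otherSpikes (ρ : Run P w) (t : ℕ) : ℕ :=
  ∑ i ∈ univ.erase P.out, (ρ.cfg t).sp i

theorem Run.otherSpikes_succ_le (hWF : P.WF) {B : ℕ} (hB : P.ConsumesAtMost P.out B)
    (ρ : Run P w) (t : ℕ) :
    ρ.otherSpikes (t + 1) ≤ ρ.otherSpikes t + (if t < w.length then 1 else 0)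
      + 2 * if FiresAt ρ t then B else 0 := by
  set s := univ.erase P.out
  have hsucc : ρ.otherSpikes (t + 1) = ∑ i ∈ s, ((ρ.cfg t).sp i - consumed (ρ.act t i))
      + ∑ i ∈ s, received P (ρ.act t) i + ∑ i ∈ s, inputSpike P (w.drop t) i := by
    simp only [Run.otherSpikes, ρ.sp_succ, sum_add_distrib]
    rfl
  have hcons : ∑ i ∈ s, ((ρ.cfg t).sp i - consumed (ρ.act t i))
      + ∑ i ∈ s, consumed (ρ.act t i) = ρ.otherSpikes t := by
    rw [← sum_add_distrib]
    exact sum_congr rfl fun i _ => Nat.sub_add_cancel (consumed_le_of_actValid (ρ.valid t i))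
  have hrecv : ∑ i ∈ s, received P (ρ.act t) i ≤ ∑ i ∈ s, consumed (ρ.act t i)
      + 2 * if FiresAt ρ t then B else 0 :=
    (sum_received_other_le hWF _).trans (add_le_add
      (sum_le_sum fun j _ => emitted_le_consumed hWF (ρ.valid t j))
      (Nat.mul_le_mul_left 2 (ρ.emitted_out_le hWF hB t)))
  have hin := sum_inputSpike_drop_le P s w t
  omega

theorem Run.otherSpikes_le (hWF : P.WF) {B : ℕ} (hB : P.ConsumesAtMost P.out B) (ρ : Run P w)
    (t : ℕ) : ρ.otherSpikes t ≤ ∑ j, P.init j + min t w.length + 2 * (B * ρ.firings 0 t) := by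
  induction t with
  | zero =>
    simp only [Run.otherSpikes, ρ.init_eq, Run.firings_self]
    exact (sum_le_sum_of_subset (subset_univ _)).trans (by simp [SNP.initConfig])
  | succ t ih =>
    have := ρ.otherSpikes_succ_le hWF hB t
    rw [ρ.mul_firings_succ B (Nat.zero_le t)]
    split_ifs at this ⊢ <;> omega

theorem Run.sp_le_of_ne_out (hWF : P.WF) {B y : ℕ} (hB : P.ConsumesAtMost P.out B) (ρ : Run P w)
    (hy : ∀ s t, ρ.firings s t ≤ y) (t : ℕ) {i : Fin 3} (hi : i ≠ P.out) :
    (ρ.cfg t).sp i ≤ ∑ j, P.init j + w.length + 2 * (B * y) := by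
  have hle : (ρ.cfg t).sp i ≤ ρ.otherSpikes t :=
    single_le_sum (fun j _ => Nat.zero_le _) (mem_erase.2 ⟨hi, mem_univ i⟩)
  have := ρ.otherSpikes_le hWF hB t
  have := Nat.mul_le_mul_left B (hy 0 t)
  omega

end ThreeNeurons

section Splice

variable {m : ℕ} {P : SNP m} {w : List Bool}

attribute [ext] Config

def Config.lower (j : Fin m) (δ : ℕ) (c : Config m) : Config m :=
  ⟨Function.update c.sp j (c.sp j - δ), c.w⟩

theorem SStep.lower {a : Fin m → Act} {c c' : Config m} {j : Fin m} {δ : ℕ}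
    (h : SStep P a c c') (hδ : δ ≤ c.sp j) (hv : ActValid P j (c.sp j - δ) (a j)) :
    SStep P a (c.lower j δ) (c'.lower j δ) := by
  obtain ⟨hvalid, hsp, hw⟩ := h
  refine ⟨fun i => ?_, fun i => ?_, hw⟩ <;> by_cases hij : i = j
  · subst hij
    simpa [Config.lower] using hv
  · simpa [Config.lower, hij] using hvalid i
  · subst hij
    have := consumed_le_of_actValid hv
    simp only [Config.lower, Function.update_self]
    rw [hsp i]
    omega
  · simpa [Config.lower, hij] using hsp i

def skipFrom (a d t : ℕ) : ℕ := if t < a then t else t + d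

theorem Run.exists_splice (ρ : Run P w) {j : Fin m} {a b δ : ℕ} (hab : a ≤ b)
    (hcfg : (ρ.cfg b).lower j δ = ρ.cfg a)
    (hvalid : ∀ u, b ≤ u → δ ≤ (ρ.cfg u).sp j ∧ ActValid P j ((ρ.cfg u).sp j - δ) (ρ.act u j)) :
    ∃ ρ' : Run P w, ∀ t, ρ'.act t = ρ.act (skipFrom a (b - a) t) := by
  let cfg t := if t < a then ρ.cfg t else (ρ.cfg (t + (b - a))).lower j δ
  have hcfg_le : ∀ t, t ≤ a → cfg t = ρ.cfg t := by
    intro t ht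
    rcases ht.lt_or_eq with ht | rfl
    · simp [cfg, ht]
    · simp [cfg, Nat.add_sub_cancel' hab, hcfg]
  refine ⟨⟨cfg, fun t => ρ.act (skipFrom a (b - a) t), ?_, fun t => ?_⟩, fun t => rfl⟩
  · rw [hcfg_le 0 (Nat.zero_le a)]
    exact ρ.init_eq
  · by_cases ht : t < a
    · rw [hcfg_le t ht.le, hcfg_le (t + 1) ht, skipFrom, if_pos ht]
      exact ρ.step t
    · simp only [cfg, skipFrom, if_neg ht, if_neg (show ¬ t + 1 < a by omega),
        show t + 1 + (b - a) = t + (b - a) + 1 by omega]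
      exact (ρ.step _).lower (hvalid _ (by omega)).1 (hvalid _ (by omega)).2

end Splice

section FirstTwo

def FirstTwo (F : ℕ → Prop) (t₁ t₂ : ℕ) : Prop :=
  t₁ < t₂ ∧ F t₁ ∧ F t₂ ∧ ∀ s, s < t₂ → s ≠ t₁ → ¬ F s

theorem FirstTwo.exists_comp {F : ℕ → Prop} {t₁ t₂ : ℕ} (h : FirstTwo F t₁ t₂) {e : ℕ → ℕ}
    (he : StrictMono e) (hF : ∀ t, F t → t ∈ Set.range e) :
    ∃ u₁ u₂, FirstTwo (F ∘ e) u₁ u₂ ∧ e u₂ = t₂ := by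
  obtain ⟨h12, hF₁, hF₂, hmin⟩ := h
  obtain ⟨u₁, rfl⟩ := hF _ hF₁
  obtain ⟨u₂, rfl⟩ := hF _ hF₂
  exact ⟨u₁, u₂, ⟨he.lt_iff_lt.1 h12, hF₁, hF₂, fun s hs hs₁ =>
    hmin (e s) (he hs) (he.injective.ne hs₁)⟩, rfl⟩

theorem strictMono_skipFrom (a d : ℕ) : StrictMono (skipFrom a d) :=
  strictMono_nat_of_lt_succ fun t => by unfold skipFrom; split_ifs <;> omega

theorem FirstTwo.exists_comp_skipFrom {F : ℕ → Prop} {t₁ t₂ a d : ℕ} (h : FirstTwo F t₁ t₂)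
    (hgap : ∀ τ, a ≤ τ → τ < a + d → ¬ F τ) (ha : a < t₂) :
    ∃ u₁ u₂, FirstTwo (F ∘ skipFrom a d) u₁ u₂ ∧ u₂ + d = t₂ := by
  have hrange : ∀ t, F t → t ∈ Set.range (skipFrom a d) := fun t ht => by
    by_cases hta : t < a
    · exact ⟨t, if_pos hta⟩
    · refine ⟨t - d, ?_⟩
      have := hgap t
      simp only [skipFrom]
      split_ifs <;> grind
  obtain ⟨u₁, u₂, hu, hu₂⟩ := h.exists_comp (strictMono_skipFrom a d) hrange
  refine ⟨u₁, u₂, hu, ?_⟩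
  simp only [skipFrom] at hu₂
  split_ifs at hu₂ <;> omega

end FirstTwo

section Shortening

def capMod (M p c : ℕ) : ℕ := if c < M then c else M + c % p

theorem capMod_lt {p : ℕ} (hp : 0 < p) (M c : ℕ) : capMod M p c < M + p := by
  unfold capMod
  split_ifs
  · omega
  · exact Nat.add_lt_add_left (Nat.mod_lt c hp) M

theorem eq_or_modEq_of_capMod_eq {M p c c' : ℕ} (h : capMod M p c = capMod M p c') :
    c = c' ∨ M ≤ c ∧ c ≡ c' [MOD p] := by
  unfold capMod at h
  unfold Nat.ModEq
  split_ifs at h <;> omega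

theorem exists_lt_map_eq_of_bounded {m R L T t₁ : ℕ} (f : ℕ → Fin m → ℕ)
    (hf : ∀ τ i, f τ i ≤ R) (hT : L + 2 * (R + 1) ^ m < T) :
    ∃ a b, L ≤ a ∧ a < b ∧ b < T ∧ (b ≤ t₁ ∨ t₁ < a) ∧ f a = f b := by
  -- pigeonhole on the value of `f` together with the side of `t₁`
  let keys := (Fintype.piFinset fun _ : Fin m => range (R + 1)) ×ˢ (univ : Finset Bool)
  have hmaps : Set.MapsTo (fun τ => (f τ, decide (τ ≤ t₁))) (Ico L T : Set ℕ) (keys : Set _) :=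
    fun τ _ => by simp [keys, hf, le_or_gt]
  have hcard : #keys < #(Ico L T) := by
    simp only [keys, card_product, Fintype.card_piFinset, card_range, prod_const, card_univ,
      Fintype.card_bool, Nat.card_Ico, Fintype.card_fin]
    omega
  obtain ⟨x, hx, y, hy, hxy, hfxy⟩ := exists_ne_map_eq_of_card_lt_of_maps_to hcard hmaps
  simp only [Prod.mk.injEq, decide_eq_decide] at hfxy
  rw [mem_Ico] at hx hy
  rcases hxy.lt_or_gt with hlt | hlt
  · exact ⟨x, y, hx.1, hlt, hy.2, by grind, hfxy.1⟩
  · exact ⟨y, x, hy.1, hlt, hx.2, by grind, hfxy.1.symm⟩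

variable {m : ℕ} {P : SNP m} {w : List Bool} {B N p y : ℕ}

/-- Once the input is read, this determines the further behaviour of a run: above `M` the
output neuron's spike count matters only modulo the period `p`. -/
def outKey (P : SNP m) (M p : ℕ) (c : Config m) (i : Fin m) : ℕ :=
  if i = P.out then capMod M p (c.sp i) else c.sp i

theorem Run.actValid_out_sub (hB : P.ConsumesAtMost P.out B) (hper : P.ActPeriodic P.out N p)
    (ρ : Run P w) (hy : ∀ s t, ρ.firings s t ≤ y) {b u δ : ℕ} (hbu : b ≤ u)
    (hδ : N + B * y + δ ≤ (ρ.cfg b).sp P.out) (hpδ : p ∣ δ) :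
    δ ≤ (ρ.cfg u).sp P.out ∧ ActValid P P.out ((ρ.cfg u).sp P.out - δ) (ρ.act u P.out) := by
  have hfu := Nat.mul_le_mul_left B (hy b u)
  have hbu' := ρ.out_le_add_firings hB hper hbu (by omega)
  refine ⟨by omega, hper.2 _ _ _ (by omega) (by omega) ?_ (ρ.valid u P.out)⟩
  exact ((Nat.modEq_iff_dvd' (Nat.sub_le _ δ)).2 (by rwa [Nat.sub_sub_self (by omega)])).symm

theorem Run.exists_splice_of_outKey_eq (hB : P.ConsumesAtMost P.out B)
    (hper : P.ActPeriodic P.out N p) (ρ : Run P w) (hy : ∀ s t, ρ.firings s t ≤ y) {a b : ℕ}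
    (hwa : w.length ≤ a) (hab : a ≤ b) (hgap : ∀ τ, a ≤ τ → τ < b → ¬ FiresAt ρ τ)
    (hkey : outKey P (N + B * y) p (ρ.cfg a) = outKey P (N + B * y) p (ρ.cfg b)) :
    ∃ ρ' : Run P w, ∀ t, ρ'.act t = ρ.act (skipFrom a (b - a) t) := by
  have hout := congrFun hkey P.out
  simp only [outKey, if_pos] at hout
  have hle : (ρ.cfg a).sp P.out ≤ (ρ.cfg b).sp P.out := by
    rcases eq_or_modEq_of_capMod_eq hout with h | ⟨hM, -⟩
    · exact h.le
    · have := ρ.out_le_add_firings hB hper hab (by rw [ρ.firings_eq_zero hgap]; omega)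
      rwa [ρ.firings_eq_zero hgap, mul_zero, add_zero] at this
  refine ρ.exists_splice (j := P.out) (δ := (ρ.cfg b).sp P.out - (ρ.cfg a).sp P.out) hab ?_
    fun u hu => ?_
  · ext i
    · by_cases hi : i = P.out
      · subst hi
        simp only [Config.lower, Function.update_self]
        omega
      · have := congrFun hkey i
        simp only [outKey, if_neg hi] at this
        simp [Config.lower, hi, this]
    · simp only [Config.lower, ρ.cfg_w, List.drop_eq_nil_of_le (hwa.trans hab),
        List.drop_eq_nil_of_le hwa]
  · rcases eq_or_modEq_of_capMod_eq hout with h | ⟨hM, hmod⟩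
    · simpa [h] using ρ.valid u P.out
    · exact ρ.actValid_out_sub hB hper hy hu (by omega) ((Nat.modEq_iff_dvd' hle).1 hmod)

theorem Run.exists_firstTwo_lt (hB : P.ConsumesAtMost P.out B) (hper : P.ActPeriodic P.out N p)
    (ρ : Run P w) (hy : ∀ s t, ρ.firings s t ≤ y) {K : ℕ}
    (hK : ∀ t, ∀ i ≠ P.out, (ρ.cfg t).sp i ≤ K) {t₁ t₂ : ℕ} (h : FirstTwo (FiresAt ρ) t₁ t₂)
    (hT : w.length + 2 * (K + N + B * y + p + 1) ^ m < t₂) :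
    ∃ ρ' : Run P w, ∃ u₁ u₂, FirstTwo (FiresAt ρ') u₁ u₂ ∧ u₂ < t₂ := by
  have hkeys : ∀ τ i, outKey P (N + B * y) p (ρ.cfg τ) i ≤ K + N + B * y + p := fun τ i => by
    unfold outKey
    split_ifs with hi
    · have := capMod_lt hper.1 (N + B * y) ((ρ.cfg τ).sp i)
      omega
    · have := hK τ i hi
      omega
  obtain ⟨a, b, hwa, hab, hbt, hside, hkey⟩ :=
    exists_lt_map_eq_of_bounded (t₁ := t₁) _ hkeys hT
  have hgap : ∀ τ, a ≤ τ → τ < b → ¬ FiresAt ρ τ := fun τ h₁ h₂ =>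
    h.2.2.2 τ (by omega) (by omega)
  obtain ⟨ρ', hρ'⟩ := ρ.exists_splice_of_outKey_eq hB hper hy hwa hab.le hgap hkey
  obtain ⟨u₁, u₂, hu, hu₂⟩ :=
    h.exists_comp_skipFrom (a := a) (d := b - a) (fun τ h₁ h₂ => hgap τ h₁ (by omega)) (by omega)
  have hF : FiresAt ρ' = FiresAt ρ ∘ skipFrom a (b - a) := by
    ext t
    simp only [FiresAt, hρ', Function.comp]
  exact ⟨ρ', u₁, u₂, hF ▸ hu, by omega⟩

theorem exists_outputs_le (hB : P.ConsumesAtMost P.out B) (hper : P.ActPeriodic P.out N p)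
    (hy : ∀ ρ : Run P w, ∀ s t, ρ.firings s t ≤ y) {K : ℕ}
    (hK : ∀ ρ : Run P w, ∀ t, ∀ i ≠ P.out, (ρ.cfg t).sp i ≤ K) {z : ℕ} (hz : Outputs P w z) :
    ∃ z' ≤ w.length + 2 * (K + N + B * y + p + 1) ^ m, Outputs P w z' := by
  suffices ∀ t₂ (ρ : Run P w) t₁, FirstTwo (FiresAt ρ) t₁ t₂ → ∃ ρ' : Run P w, ∃ u₁ u₂,
      FirstTwo (FiresAt ρ') u₁ u₂ ∧ u₂ ≤ w.length + 2 * (K + N + B * y + p + 1) ^ m by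
    obtain ⟨ρ, t₁, t₂, h₁₂, hF₁, hF₂, hmin, -⟩ := hz
    obtain ⟨ρ', u₁, u₂, ⟨hu, hF₁', hF₂', hmin'⟩, hu₂⟩ := this t₂ ρ t₁ ⟨h₁₂, hF₁, hF₂, hmin⟩
    exact ⟨u₂ - u₁, by omega, ρ', u₁, u₂, hu, hF₁', hF₂', hmin', rfl⟩
  intro t₂
  induction t₂ using Nat.strong_induction_on with
  | _ t₂ ih =>
    intro ρ t₁ h
    by_cases hT : t₂ ≤ w.length + 2 * (K + N + B * y + p + 1) ^ m
    · exact ⟨ρ, t₁, t₂, h, hT⟩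
    · obtain ⟨ρ', u₁, u₂, hu, hu₂⟩ :=
        ρ.exists_firstTwo_lt hB hper (hy ρ) (hK ρ) h (not_le.1 hT)
      exact ih u₂ hu₂ ρ' u₁ hu

end Shortening

section Diagonal

def runningMax (f : ℕ → ℕ) : ℕ → ℕ
  | 0 => f 0
  | k + 1 => max (runningMax f k) (f (k + 1))

theorem le_runningMax (f : ℕ → ℕ) {j k : ℕ} (h : j ≤ k) : f j ≤ runningMax f k := by
  induction k with
  | zero => rw [Nat.le_zero.1 h]; rfl
  | succ k ih =>
    rcases h.lt_or_eq with h | rfl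
    · exact (ih (by omega)).trans (le_max_left _ _)
    · exact le_max_right _ _

theorem computable_runningMax {f : ℕ → ℕ} (hf : Computable f) : Computable (runningMax f) := by
  have hstep : Computable₂ fun (_ : ℕ) (kr : ℕ × ℕ) => max kr.2 (f (kr.1 + 1)) :=
    (Primrec.nat_max.to_comp.comp (Computable.snd.comp Computable.snd)
      (hf.comp (Computable.succ.comp (Computable.fst.comp Computable.snd)))).to₂
  refine (Computable.nat_rec Computable.id (Computable.const (f 0)) hstep).of_eq fun k => ?_
  induction k with
  | zero => rfl
  | succ k ih => rw [runningMax, ← ih]; rfl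

/-- By Kleene's recursion theorem some program outputs a value exceeding `f` on all outputs
below the bound for its own input. -/
theorem not_universalVia_of_exists_output_le {m : ℕ} {P : SNP m}
    {Out : List Bool → ℕ → Prop} {T : List Bool → ℕ} (hT : Computable T)
    (hOut : ∀ w z, Out w z → ∃ z' ≤ T w, Out w z') : ¬ UniversalVia P Out := by
  rintro ⟨f, g, hf, hg, hU⟩
  let bound (c : Nat.Partrec.Code) : ℕ := runningMax f (T (g (Encodable.encode c, []))) + 1
  have hbound : Computable bound := Computable.succ.comp <| (computable_runningMax hf).comp <|
    hT.comp <| hg.comp <| Computable.encode.pair (Computable.const [])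
  obtain ⟨c, hc⟩ := Nat.Partrec.Code.fixed_point₂ (f := fun c _ => Part.some (bound c))
    (show Computable₂ fun c (_ : ℕ) => bound c from hbound.comp Computable.fst).partrec₂
  have hphi : phi (Encodable.encode c) [] = Part.some (bound c) := by
    simp only [phi, Denumerable.ofNat_encode, hc]
  obtain ⟨z, hz⟩ := (hU (Encodable.encode c) []).2 (by rw [hphi]; trivial)
  obtain ⟨z', hz'T, hz'⟩ := hOut _ z hz
  have hfz' : runningMax f (T (g (Encodable.encode c, []))) + 1 = f z' :=
    Part.some_injective (hphi.symm.trans ((hU _ []).1 z' hz'))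
  have := le_runningMax f hz'T
  omega

end Diagonal

/-- There is no universal extended SN P system without delay
having only 3 neurons, generalised input and standard output (output neuron
firing at most a constant number of times, independent of the input). -/
theorem no_universal_three_neuron_SNP_with_standard_output :
    ¬ ∃ P : SNP 3, P.WF ∧
      (∃ y : ℕ, ∀ (w : List Bool) (ρ : Run P w) (S : Finset ℕ),
        (∀ t ∈ S, FiresAt ρ t) → S.card ≤ y) ∧
      Universal P := by
  rintro ⟨P, hWF, ⟨y, hy⟩, hU⟩
  obtain ⟨B, hB⟩ := hWF.exists_consumesAtMost P.out
  obtain ⟨N, p, hper⟩ := hWF.exists_actPeriodic P.out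
  have hfirings : ∀ w (ρ : Run P w) s t, ρ.firings s t ≤ y := fun w ρ _ _ =>
    hy w ρ _ fun _ hτ => (mem_filter.1 hτ).2
  set C := ∑ j, P.init j + 2 * (B * y) + N + B * y + p + 1
  have hT : Computable fun w : List Bool => w.length + 2 * (w.length + C) ^ 3 :=
    (Primrec.nat_add.comp Primrec.list_length <| Primrec.nat_mul.comp (Primrec.const 2) <|
      (Primrec₂.unpaired'.1 Nat.Primrec.pow).comp
        (Primrec.nat_add.comp Primrec.list_length (Primrec.const C)) (Primrec.const 3)).to_comp
  refine not_universalVia_of_exists_output_le hT (fun w z hz => ?_) hU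
  obtain ⟨z', hz', hout⟩ := exists_outputs_le hB hper (hfirings w)
    (fun ρ t _ hi => ρ.sp_le_of_ne_out hWF hB (hfirings w ρ) t hi) hz
  exact ⟨z', hz'.trans_eq (by ring), hout⟩

end PaperSNP
end
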